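/- Let (H,{F_A},{F_G}) be a GR(1) game with singleton winning conditions, Z^∞ = ⟦φ₄⟧, and f¹ the memoryless strategy extracted from the rank. Then for all q ∈ Z^∞, L_q(H,f¹) ∩ L_q(H,F_G) ≠ ∅; that is, there exists a play from q compliant with f¹ that visits F_G infinitely often. -/
import Mathlib


namespace GR1

/-- A two-player game graph `H = ⟨Q⁰, Q¹, δ⁰, δ¹, q₀⟩`.  `env` is the set `Q⁰` of
environment states, `sys` the set `Q¹` of system states, and `delta` combines the
transition functions `δ⁰` and `δ¹`. -/
structure GameGraph (Q : Type*) where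
  env : Set Q
  sys : Set Q
  delta : Q → Set Q
  disjoint_env_sys : Disjoint env sys
  union_env_sys : env ∪ sys = Set.univ
  delta_env : ∀ q ∈ env, delta q ⊆ sys
  delta_sys : ∀ q ∈ sys, delta q ⊆ env
  delta_nonempty : ∀ q, (delta q).Nonempty
  init : Q
  init_env : init ∈ env

namespace GameGraph

/-- The existential predecessor operator `Pre∃`. -/
def PreE {Q : Type*} (G : GameGraph Q) (P : Set Q) : Set Q :=
  {q | (G.delta q ∩ P).Nonempty}

/-- The universal predecessor operator `Pre∀`. -/
def PreA {Q : Type*} (G : GameGraph Q) (P : Set Q) : Set Q :=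
  {q | G.delta q ⊆ P}

/-- The player-0 (environment) controllable predecessor operator `Pre⁰`. -/
def Pre0 {Q : Type*} (G : GameGraph Q) (P : Set Q) : Set Q :=
  {q | q ∈ G.env ∧ (G.delta q ∩ P).Nonempty} ∪ {q | q ∈ G.sys ∧ G.delta q ⊆ P}

/-- The player-1 (system) controllable predecessor operator `Pre¹`. -/
def Pre1 {Q : Type*} (G : GameGraph Q) (P : Set Q) : Set Q :=
  {q | q ∈ G.env ∧ G.delta q ⊆ P} ∪ {q | q ∈ G.sys ∧ (G.delta q ∩ P).Nonempty}

/-- The conditional predecessor `Precond(P,P') = Pre∃(P) ∩ Pre¹(P ∪ P')`. -/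
def Precond {Q : Type*} (G : GameGraph Q) (P P' : Set Q) : Set Q :=
  G.PreE P ∩ G.Pre1 (P ∪ P')

/-- The dual conditional predecessor `Precondᶜ(P,P') = Pre∀(P) ∪ Pre⁰(P ∩ P')`. -/
def PrecondC {Q : Type*} (G : GameGraph Q) (P P' : Set Q) : Set Q :=
  G.PreA P ∪ G.Pre0 (P ∩ P')

end GameGraph

/-- Knaster–Tarski least fixed point over the powerset lattice. -/
def lfpSet {Q : Type*} (F : Set Q → Set Q) : Set Q := ⋂₀ {S | F S ⊆ S}

/-- Knaster–Tarski greatest fixed point over the powerset lattice. -/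
def gfpSet {Q : Type*} (F : Set Q → Set Q) : Set Q := ⋃₀ {S | S ⊆ F S}

/-- Knaster–Tarski least fixed point over the lattice of vectors of sets. -/
def lfpVec {Q : Type*} {n : ℕ} (F : (Fin n → Set Q) → (Fin n → Set Q)) : Fin n → Set Q :=
  fun a => ⋂ V ∈ {V : Fin n → Set Q | ∀ a', F V a' ⊆ V a'}, V a

/-- Knaster–Tarski greatest fixed point over the lattice of vectors of sets. -/
def gfpVec {Q : Type*} {n : ℕ} (F : (Fin n → Set Q) → (Fin n → Set Q)) : Fin n → Set Q :=
  fun a => ⋃ V ∈ {V : Fin n → Set Q | ∀ a', V a' ⊆ F V a'}, V a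

/-- Cyclic successor of a mode: `a⁺ = (a mod n) + 1` in 1-based counting. -/
def modeSucc {n : ℕ} (a : Fin n) : Fin n :=
  ⟨(a.val + 1) % n, Nat.mod_lt _ a.pos⟩

/-- `π` is an (infinite) play over `G` starting in the state `q`. -/
def IsPlayFrom {Q : Type*} (G : GameGraph Q) (q : Q) (π : ℕ → Q) : Prop :=
  π 0 = q ∧ ∀ k, π (k + 1) ∈ G.delta (π k)

/-- `Inf(π) ∩ F ≠ ∅` : the play `π` visits the set `F` infinitely often. -/
def InfOft {Q : Type*} (π : ℕ → Q) (F : Set Q) : Prop := ∀ n, ∃ k, n ≤ k ∧ π k ∈ F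

/-- `L_q(H,F)` : plays from `q` satisfying the Büchi condition `F`. -/
def LBuchi {Q : Type*} (G : GameGraph Q) (q : Q) (F : Set Q) : Set (ℕ → Q) :=
  {π | IsPlayFrom G q π ∧ InfOft π F}

/-- `L_q(H,𝓕)` : plays from `q` satisfying the generalized Büchi condition `𝓕`. -/
def LGenBuchi {Q ι : Type*} (G : GameGraph Q) (q : Q) (F : ι → Set Q) : Set (ℕ → Q) :=
  {π | IsPlayFrom G q π ∧ ∀ i, InfOft π (F i)}

/-- `Pre(L)` : the set of all finite prefixes of the (infinite) words in `L`. -/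
def prefixes {Q : Type*} (L : Set (ℕ → Q)) : Set (List Q) :=
  {w | ∃ π ∈ L, ∃ k, w = (List.range k).map π}

/-- A (history dependent) system strategy: on a history ending in a system state it
produces a `δ¹`-successor of that state. -/
def IsSysStrategy {Q : Type*} (G : GameGraph Q) (f : List Q → Q) : Prop :=
  ∀ (w : List Q) (q : Q), q ∈ G.sys → f (w ++ [q]) ∈ G.delta q

/-- The finite history `π|_{[0,k]}` of a play. -/
def histUpTo {Q : Type*} (π : ℕ → Q) (k : ℕ) : List Q := (List.range (k + 1)).map π

/-- `L_q(H,f¹)` : plays from `q` compliant with the system strategy `f¹`. -/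
def Lstrat {Q : Type*} (G : GameGraph Q) (q : Q) (f : List Q → Q) : Set (ℕ → Q) :=
  {π | IsPlayFrom G q π ∧ ∀ k, π k ∈ G.sys → π (k + 1) = f (histUpTo π k)}

/-- `L_q(H,f¹)` for a memoryless system strategy `f¹ : Q → Q`. -/
def Lmem {Q : Type*} (G : GameGraph Q) (q : Q) (f : Q → Q) : Set (ℕ → Q) :=
  {π | IsPlayFrom G q π ∧ ∀ k, π k ∈ G.sys → π (k + 1) = f (π k)}

/-- Strict lexicographic order on ranks. -/
def rankLt (p r : ℕ × ℕ) : Prop := p.1 < r.1 ∨ (p.1 = r.1 ∧ p.2 < r.2)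

/-- Lexicographic order on ranks. -/
def rankLe (p r : ℕ × ℕ) : Prop := p.1 < r.1 ∨ (p.1 = r.1 ∧ p.2 ≤ r.2)

/-! ### The 4-nested fixed point `φ₄` for singleton winning conditions -/

/-- The body `(F_G ∩ Pre¹(Z)) ∪ Pre¹(Y) ∪ ((Q∖F_A) ∩ Precond(W, X∖F_A))`. -/
def body {Q : Type*} (G : GameGraph Q) (FA FG Z Y X W : Set Q) : Set Q :=
  (FG ∩ G.Pre1 Z) ∪ G.Pre1 Y ∪ (FAᶜ ∩ G.Precond W (X \ FA))

def innerW {Q : Type*} (G : GameGraph Q) (FA FG Z Y X : Set Q) : Set Q :=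
  lfpSet (fun W => body G FA FG Z Y X W)

def innerX {Q : Type*} (G : GameGraph Q) (FA FG Z Y : Set Q) : Set Q :=
  gfpSet (fun X => innerW G FA FG Z Y X)

def innerY {Q : Type*} (G : GameGraph Q) (FA FG Z : Set Q) : Set Q :=
  lfpSet (fun Y => innerX G FA FG Z Y)

/-- `⟦φ₄⟧ = Z^∞` : the value of `νZ.μY.νX.μW. (F_G ∩ Pre¹(Z)) ∪ Pre¹(Y) ∪
((Q∖F_A) ∩ Precond(W, X∖F_A))`. -/
def phi4 {Q : Type*} (G : GameGraph Q) (FA FG : Set Q) : Set Q :=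
  gfpSet (fun Z => innerY G FA FG Z)

/-- The approximants `Yⁱ` of `Y` in the terminal iteration over `Z` (`Y⁰ = ∅`). -/
def Yapprox {Q : Type*} (G : GameGraph Q) (FA FG : Set Q) : ℕ → Set Q
  | 0 => ∅
  | i + 1 => innerX G FA FG (phi4 G FA FG) (Yapprox G FA FG i)

/-- The approximants `Wⁱ_j` of `W` computed with `X = Xⁱ = Yⁱ` and `Y = Yⁱ⁻¹`. -/
def Wapprox {Q : Type*} (G : GameGraph Q) (FA FG : Set Q) (i : ℕ) : ℕ → Set Q
  | 0 => ∅
  | j + 1 =>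
      body G FA FG (phi4 G FA FG) (Yapprox G FA FG (i - 1)) (Yapprox G FA FG i)
        (Wapprox G FA FG i j)

/-- `rank(q) = (i,j)` iff `q ∈ (Yⁱ∖Yⁱ⁻¹) ∩ (Wⁱ_j∖Wⁱ_{j−1})` with `i,j > 0`. -/
def hasRank {Q : Type*} (G : GameGraph Q) (FA FG : Set Q) (q : Q) (i j : ℕ) : Prop :=
  0 < i ∧ 0 < j ∧
    q ∈ (Yapprox G FA FG i \ Yapprox G FA FG (i - 1)) ∩
        (Wapprox G FA FG i j \ Wapprox G FA FG i (j - 1))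

/-- The memoryless system strategy extracted from the ranking: `f¹(q) ∈ δ¹(q)`,
`rank(f¹(q)) < rank(q)` whenever `rank(q) > (1,1)`, and `f¹(q) ∈ Z^∞` otherwise. -/
def GoodStrategy {Q : Type*} (G : GameGraph Q) (FA FG : Set Q) (f : Q → Q) : Prop :=
  ∀ q, q ∈ G.sys → q ∈ phi4 G FA FG →
    f q ∈ G.delta q ∧
      ∀ i j, hasRank G FA FG q i j →
        (((i, j) = ((1 : ℕ), (1 : ℕ)) → f q ∈ phi4 G FA FG) ∧
          ((i, j) ≠ ((1 : ℕ), (1 : ℕ)) →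
            ∃ i' j', hasRank G FA FG (f q) i' j' ∧ rankLt (i', j') (i, j)))

/-! ### The negated fixed point `φ̄₄` (singleton conditions) -/

/-- The simplified negated body
`Pre⁰(Z̄) ∪ ((Q∖F_G) ∩ F_A ∩ Pre⁰(Ȳ)) ∪ ((Q∖F_G) ∩ Precondᶜ(W̄, X̄ ∪ F_A))`. -/
def nbody {Q : Type*} (G : GameGraph Q) (FA FG Z Y X W : Set Q) : Set Q :=
  G.Pre0 Z ∪ (FGᶜ ∩ FA ∩ G.Pre0 Y) ∪ (FGᶜ ∩ G.PrecondC W (X ∪ FA))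

/-- The simplified negated fixed point `φ̄₄ = μZ̄.νȲ.μX̄.νW̄. nbody`. -/
def phi4neg {Q : Type*} (G : GameGraph Q) (FA FG : Set Q) : Set Q :=
  lfpSet (fun Z => gfpSet (fun Y => lfpSet (fun X => gfpSet (fun W =>
    nbody G FA FG Z Y X W))))

/-- The unsimplified negation body
`((Q∖F_G) ∪ Pre⁰(Z̄)) ∩ Pre⁰(Ȳ) ∩ (F_A ∪ Precondᶜ(W̄, X̄ ∪ F_A))`. -/
def nbodyRaw {Q : Type*} (G : GameGraph Q) (FA FG Z Y X W : Set Q) : Set Q :=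
  (FGᶜ ∪ G.Pre0 Z) ∩ G.Pre0 Y ∩ (FA ∪ G.PrecondC W (X ∪ FA))

/-- The unsimplified negated fixed point. -/
def phi4negRaw {Q : Type*} (G : GameGraph Q) (FA FG : Set Q) : Set Q :=
  lfpSet (fun Z => gfpSet (fun Y => lfpSet (fun X => gfpSet (fun W =>
    nbodyRaw G FA FG Z Y X W))))

/-- The approximants `Z̄ⁱ` of the negated fixed point (`Z̄⁰ = ∅`). -/
def Zbar {Q : Type*} (G : GameGraph Q) (FA FG : Set Q) : ℕ → Set Q
  | 0 => ∅
  | i + 1 =>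
      gfpSet (fun Y => lfpSet (fun X => gfpSet (fun W =>
        nbody G FA FG (Zbar G FA FG i) Y X W)))

/-- The approximants `X̄ⁱ_j` of `X̄` computed while computing `Z̄ⁱ` (using `Ȳ = Z̄ⁱ` and
`Z̄ = Z̄ⁱ⁻¹`), with `X̄ⁱ₀ = ∅`. -/
def Xbar {Q : Type*} (G : GameGraph Q) (FA FG : Set Q) (i : ℕ) : ℕ → Set Q
  | 0 => ∅
  | j + 1 =>
      gfpSet (fun W =>
        nbody G FA FG (Zbar G FA FG (i - 1)) (Zbar G FA FG i) (Xbar G FA FG i j) W)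

/-- The negated rank: `rank(q) = (i,j)` iff `q ∈ X̄ⁱ_j ∖ X̄ⁱ_{j−1}` with `i,j > 0`. -/
def nrank {Q : Type*} (G : GameGraph Q) (FA FG : Set Q) (q : Q) (i j : ℕ) : Prop :=
  0 < i ∧ 0 < j ∧ q ∈ Xbar G FA FG i j \ Xbar G FA FG i (j - 1)

/-- Environment moves permitted during the inductive construction of the reachable
region `R_{f¹}` (cases (a'), (b'), (c'2), (c'3) and the remaining case (c'1)). -/
def envStep {Q : Type*} (G : GameGraph Q) (FA FG : Set Q) (q' q'' : Q) : Prop :=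
  q'' ∈ G.delta q' ∧
    ∃ i j, nrank G FA FG q' i j ∧
      ((q'' ∈ (phi4 G FA FG)ᶜ ∧ ∃ i' j', nrank G FA FG q'' i' j' ∧ i' ≤ i - 1) ∨
       (q' ∈ FA \ FG ∧ q'' ∈ (phi4 G FA FG)ᶜ ∧
          ∃ i' j', nrank G FA FG q'' i' j' ∧ i' ≤ i) ∨
       (q'' ∈ (phi4 G FA FG)ᶜ ∧
          ∃ i' j', nrank G FA FG q'' i' j' ∧ rankLe (i', j') (i, j - 1)) ∨
       (q'' ∈ (phi4 G FA FG)ᶜ ∧ q'' ∈ FA ∧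
          ∃ i' j', nrank G FA FG q'' i' j' ∧ rankLe (i', j') (i, j)) ∨
       (∀ p ∈ G.delta q', p ∈ (phi4 G FA FG)ᶜ ∧
          ∃ i' j', nrank G FA FG p i' j' ∧ rankLe (i', j') (i, j)))

/-- `L_q(H,f¹,R_{f¹})` : plays from `q` compliant with `f¹` that remain within the
reachable region `R_{f¹}`, i.e. in which every environment move follows the rules of
the inductive construction of `R_{f¹}`. -/
def Lrestr {Q : Type*} (G : GameGraph Q) (FA FG : Set Q) (q : Q) (f : List Q → Q) :
    Set (ℕ → Q) :=
  {π | π ∈ Lstrat G q f ∧ ∀ k, π k ∈ G.env → envStep G FA FG (π k) (π (k + 1))}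

/-! ### The vectorized fixed point `φ₄ᵛ` for general GR(1) conditions -/

/-- The body `Ω^{ab}` of the vectorized fixed point. -/
def bodyV {Q : Type*} {n m : ℕ} (G : GameGraph Q) (FAv : Fin m → Set Q)
    (FGv : Fin n → Set Q) (Zv : Fin n → Set Q) (a : Fin n) (b : Fin m)
    (Y X W : Set Q) : Set Q :=
  (FGv a ∩ G.Pre1 (Zv (modeSucc a))) ∪ G.Pre1 Y ∪ ((FAv b)ᶜ ∩ G.Precond W (X \ FAv b))

def innerWV {Q : Type*} {n m : ℕ} (G : GameGraph Q) (FAv : Fin m → Set Q)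
    (FGv : Fin n → Set Q) (Zv : Fin n → Set Q) (a : Fin n) (b : Fin m)
    (Y X : Set Q) : Set Q :=
  lfpSet (fun W => bodyV G FAv FGv Zv a b Y X W)

def innerXV {Q : Type*} {n m : ℕ} (G : GameGraph Q) (FAv : Fin m → Set Q)
    (FGv : Fin n → Set Q) (Zv : Fin n → Set Q) (a : Fin n) (b : Fin m)
    (Y : Set Q) : Set Q :=
  gfpSet (fun X => innerWV G FAv FGv Zv a b Y X)

/-- The vector `[Z¹,…,Zⁿ]` of the vectorized fixed point `φ₄ᵛ`. -/
def phi4v {Q : Type*} {n m : ℕ} (G : GameGraph Q) (FAv : Fin m → Set Q)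
    (FGv : Fin n → Set Q) : Fin n → Set Q :=
  gfpVec (fun Zv a => lfpSet (fun Y => ⋃ b, innerXV G FAv FGv Zv a b Y))

/-- `⟦φ₄ᵛ⟧ = Z^∞ = ⋃_a Zᵃ^∞`. -/
def phi4vSem {Q : Type*} {n m : ℕ} (G : GameGraph Q) (FAv : Fin m → Set Q)
    (FGv : Fin n → Set Q) : Set Q :=
  ⋃ a, phi4v G FAv FGv a

/-- The approximants `ᵃYⁱ` (with `ᵃY⁰ = ∅`) of `Yᵃ` in the terminal iteration. -/
def YapproxV {Q : Type*} {n m : ℕ} (G : GameGraph Q) (FAv : Fin m → Set Q)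
    (FGv : Fin n → Set Q) (a : Fin n) : ℕ → Set Q
  | 0 => ∅
  | i + 1 => ⋃ b, innerXV G FAv FGv (phi4v G FAv FGv) a b (YapproxV G FAv FGv a i)

/-- The fixed point `ᵃᵇXⁱ` of `X^{ab}` computed during the `i`-th iteration. -/
def XfixV {Q : Type*} {n m : ℕ} (G : GameGraph Q) (FAv : Fin m → Set Q)
    (FGv : Fin n → Set Q) (a : Fin n) (b : Fin m) (i : ℕ) : Set Q :=
  innerXV G FAv FGv (phi4v G FAv FGv) a b (YapproxV G FAv FGv a (i - 1))

/-- The approximants `ᵃᵇWⁱ_j` of `W^{ab}` computed while computing `ᵃYⁱ`. -/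
def WapproxV {Q : Type*} {n m : ℕ} (G : GameGraph Q) (FAv : Fin m → Set Q)
    (FGv : Fin n → Set Q) (a : Fin n) (b : Fin m) (i : ℕ) : ℕ → Set Q
  | 0 => ∅
  | j + 1 =>
      bodyV G FAv FGv (phi4v G FAv FGv) a b (YapproxV G FAv FGv a (i - 1))
        (XfixV G FAv FGv a b i) (WapproxV G FAv FGv a b i j)

/-- The mode-based rank: `ᵃᵇrank(q) = (i,j)` iff
`q ∈ (ᵃYⁱ∖ᵃYⁱ⁻¹) ∩ (ᵃᵇWⁱ_j∖ᵃᵇWⁱ_{j−1})` with `i,j > 0`. -/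
def hasRankV {Q : Type*} {n m : ℕ} (G : GameGraph Q) (FAv : Fin m → Set Q)
    (FGv : Fin n → Set Q) (a : Fin n) (b : Fin m) (q : Q) (i j : ℕ) : Prop :=
  0 < i ∧ 0 < j ∧
    q ∈ (YapproxV G FAv FGv a i \ YapproxV G FAv FGv a (i - 1)) ∩
        (WapproxV G FAv FGv a b i j \ WapproxV G FAv FGv a b i (j - 1))

/-- The finite-memory system strategy extracted from the mode-based ranking. -/
def GoodStrategyV {Q : Type*} {n m : ℕ} (G : GameGraph Q) (FAv : Fin m → Set Q)
    (FGv : Fin n → Set Q) (f : Q × Fin n × Fin m → Q × Fin n × Fin m) : Prop :=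
  ∀ (q : Q) (a : Fin n) (b : Fin m), q ∈ G.sys → q ∈ phi4v G FAv FGv a →
    (f (q, a, b)).1 ∈ G.delta q ∧
      ∀ i j, hasRankV G FAv FGv a b q i j →
        (((i, j) = ((1 : ℕ), (1 : ℕ)) →
            (f (q, a, b)).1 ∈ phi4v G FAv FGv (modeSucc a) ∧
              (f (q, a, b)).2.1 = modeSucc a) ∧
          (1 < i ∧ j = 1 →
            (f (q, a, b)).2.1 = a ∧
              ∃ i' j',
                hasRankV G FAv FGv a ((f (q, a, b)).2.2) ((f (q, a, b)).1) i' j' ∧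
                  i' ≤ i - 1) ∧
          (1 < j →
            (f (q, a, b)).2.1 = a ∧ (f (q, a, b)).2.2 = b ∧
              ∃ i' j',
                hasRankV G FAv FGv a b ((f (q, a, b)).1) i' j' ∧
                  rankLe (i', j') (i, j - 1)))

/-- Compliance of a play with a finite-memory strategy via mode traces `α`, `β`. -/
def CompliantModeV {Q : Type*} {n m : ℕ} (G : GameGraph Q) (FAv : Fin m → Set Q)
    (FGv : Fin n → Set Q) (f : Q × Fin n × Fin m → Q × Fin n × Fin m)
    (π : ℕ → Q) (α : ℕ → Fin n) (β : ℕ → Fin m) : Prop :=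
  ∀ k,
    (π k ∈ G.sys → (π (k + 1), α (k + 1), β (k + 1)) = f (π k, α k, β k)) ∧
      (π k ∈ G.env →
        (hasRankV G FAv FGv (α k) (β k) (π (k + 1)) 1 1 →
            α (k + 1) = modeSucc (α k)) ∧
          ((∃ i, 1 < i ∧ hasRankV G FAv FGv (α k) (β k) (π (k + 1)) i 1) →
            α (k + 1) = α k) ∧
          ((∃ i j, 1 < j ∧ hasRankV G FAv FGv (α k) (β k) (π (k + 1)) i j) →
            α (k + 1) = α k ∧ β (k + 1) = β k))

/-- `L_q(H,f¹)` for a finite-memory strategy: plays from `q` compliant with `f¹`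
for some mode traces. -/
def LmodeV {Q : Type*} {n m : ℕ} (G : GameGraph Q) (FAv : Fin m → Set Q)
    (FGv : Fin n → Set Q) (q : Q) (f : Q × Fin n × Fin m → Q × Fin n × Fin m) :
    Set (ℕ → Q) :=
  {π | IsPlayFrom G q π ∧ ∃ α β, CompliantModeV G FAv FGv f π α β}

/-- `ᵃD = F_Gᵃ ∩ Pre¹(Z^{a⁺,∞})`. -/
def DsetV {Q : Type*} {n m : ℕ} (G : GameGraph Q) (FAv : Fin m → Set Q)
    (FGv : Fin n → Set Q) (a : Fin n) : Set Q :=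
  FGv a ∩ G.Pre1 (phi4v G FAv FGv (modeSucc a))

/-- `ᵃEⁱ = Pre¹(ᵃYⁱ⁻¹) ∖ ᵃYⁱ⁻¹`. -/
def EsetV {Q : Type*} {n m : ℕ} (G : GameGraph Q) (FAv : Fin m → Set Q)
    (FGv : Fin n → Set Q) (a : Fin n) (i : ℕ) : Set Q :=
  G.Pre1 (YapproxV G FAv FGv a (i - 1)) \ YapproxV G FAv FGv a (i - 1)

/-- `ᵃᵇΘⁱ_j = (Q∖F_Aᵇ) ∩ Precond(ᵃᵇWⁱ_{j−1}, ᵃᵇXⁱ∖F_Aᵇ)`. -/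
def ThetaV {Q : Type*} {n m : ℕ} (G : GameGraph Q) (FAv : Fin m → Set Q)
    (FGv : Fin n → Set Q) (a : Fin n) (b : Fin m) (i j : ℕ) : Set Q :=
  (FAv b)ᶜ ∩ G.Precond (WapproxV G FAv FGv a b i (j - 1)) (XfixV G FAv FGv a b i \ FAv b)

/-- `ᵃᵇRⁱ_j = ᵃᵇΘⁱ_j ∖ (ᵃᵇWⁱ_{j−1} ∪ ᵃYⁱ⁻¹ ∪ ᵃEⁱ ∪ ᵃD)`. -/
def RsetV {Q : Type*} {n m : ℕ} (G : GameGraph Q) (FAv : Fin m → Set Q)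
    (FGv : Fin n → Set Q) (a : Fin n) (b : Fin m) (i j : ℕ) : Set Q :=
  ThetaV G FAv FGv a b i j \
    (WapproxV G FAv FGv a b i (j - 1) ∪ YapproxV G FAv FGv a (i - 1) ∪
      EsetV G FAv FGv a i ∪ DsetV G FAv FGv a)

/-! ### The negated vectorized fixed point -/

/-- The body of the negated vectorized fixed point. -/
def nbodyV {Q : Type*} {n m : ℕ} (G : GameGraph Q) (FAv : Fin m → Set Q)
    (FGv : Fin n → Set Q) (Zv : Fin n → Set Q) (a : Fin n) (b : Fin m)
    (Y X W : Set Q) : Set Q :=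
  G.Pre0 (Zv (modeSucc a)) ∪ ((FGv a)ᶜ ∩ FAv b ∩ G.Pre0 Y) ∪
    ((FGv a)ᶜ ∩ G.PrecondC W (X ∪ FAv b))

/-- The coordinated approximants `Z̄ᵃⁱ` of the negated vectorized fixed point. -/
def ZbarV {Q : Type*} {n m : ℕ} (G : GameGraph Q) (FAv : Fin m → Set Q)
    (FGv : Fin n → Set Q) : ℕ → Fin n → Set Q
  | 0 => fun _ => ∅
  | i + 1 => fun a =>
      gfpSet (fun Y => ⋂ b, lfpSet (fun X => gfpSet (fun W =>
        nbodyV G FAv FGv (ZbarV G FAv FGv i) a b Y X W)))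

/-- The approximants `X̄^{ab,i}_j` of `X̄^{ab}` computed during the `i`-th iteration. -/
def XbarV {Q : Type*} {n m : ℕ} (G : GameGraph Q) (FAv : Fin m → Set Q)
    (FGv : Fin n → Set Q) (a : Fin n) (b : Fin m) (i : ℕ) : ℕ → Set Q
  | 0 => ∅
  | j + 1 =>
      gfpSet (fun W =>
        nbodyV G FAv FGv (ZbarV G FAv FGv (i - 1)) a b (ZbarV G FAv FGv i a)
          (XbarV G FAv FGv a b i j) W)

/-- The negated mode-based rank: `ᵃᵇrank(q) = (i,j)` iff `q ∈ X̄^{ab,i}_j∖X̄^{ab,i}_{j−1}`. -/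
def nrankV {Q : Type*} {n m : ℕ} (G : GameGraph Q) (FAv : Fin m → Set Q)
    (FGv : Fin n → Set Q) (a : Fin n) (b : Fin m) (q : Q) (i j : ℕ) : Prop :=
  0 < i ∧ 0 < j ∧ q ∈ XbarV G FAv FGv a b i j \ XbarV G FAv FGv a b i (j - 1)

/-- Environment moves permitted during the inductive construction of `R_{f¹}`
in the vectorized setting. -/
def envStepV {Q : Type*} {n m : ℕ} (G : GameGraph Q) (FAv : Fin m → Set Q)
    (FGv : Fin n → Set Q) (q' q'' : Q) : Prop :=
  q'' ∈ G.delta q' ∧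
    ∃ (a : Fin n) (b : Fin m) (i j : ℕ), nrankV G FAv FGv a b q' i j ∧
      ((q'' ∈ (phi4vSem G FAv FGv)ᶜ ∧
          ∃ b' i' j', nrankV G FAv FGv (modeSucc a) b' q'' i' j' ∧ i' ≤ i - 1) ∨
       (q' ∈ FAv b \ FGv a ∧ q'' ∈ (phi4vSem G FAv FGv)ᶜ ∧
          ∃ b' i' j', nrankV G FAv FGv a b' q'' i' j' ∧ i' ≤ i) ∨
       (q'' ∈ (phi4vSem G FAv FGv)ᶜ ∧
          ∃ i' j', nrankV G FAv FGv a b q'' i' j' ∧ rankLe (i', j') (i, j - 1)) ∨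
       (q'' ∈ (phi4vSem G FAv FGv)ᶜ ∧ q'' ∈ FAv b ∧
          ∃ i' j', nrankV G FAv FGv a b q'' i' j' ∧ rankLe (i', j') (i, j)) ∨
       (∀ p ∈ G.delta q', p ∈ (phi4vSem G FAv FGv)ᶜ ∧
          ∃ i' j', nrankV G FAv FGv a b p i' j' ∧ rankLe (i', j') (i, j)))

/-- `L_q(H,f¹,R_{f¹})` in the vectorized setting. -/
def LrestrV {Q : Type*} {n m : ℕ} (G : GameGraph Q) (FAv : Fin m → Set Q)
    (FGv : Fin n → Set Q) (q : Q) (f : List Q → Q) : Set (ℕ → Q) :=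
  {π | π ∈ Lstrat G q f ∧ ∀ k, π k ∈ G.env → envStepV G FAv FGv (π k) (π (k + 1))}

/-! ### Auxiliary lemmas for Statement 7 -/

section Aux7

variable {Q : Type*}

theorem my_lfpSet_le {F : Set Q → Set Q} {S : Set Q} (h : F S ⊆ S) : lfpSet F ⊆ S :=
  Set.sInter_subset_of_mem h

theorem my_le_gfpSet {F : Set Q → Set Q} {S : Set Q} (h : S ⊆ F S) : S ⊆ gfpSet F :=
  Set.subset_sUnion_of_mem h

theorem my_lfpSet_fixed {F : Set Q → Set Q} (hF : Monotone F) : F (lfpSet F) = lfpSet F := by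
  have h1 : F (lfpSet F) ⊆ lfpSet F := by
    intro x hx
    exact Set.mem_sInter.2 fun S hS => hS ((hF (my_lfpSet_le hS)) hx)
  exact Set.Subset.antisymm h1 (my_lfpSet_le (hF h1))

theorem my_gfpSet_fixed {F : Set Q → Set Q} (hF : Monotone F) : F (gfpSet F) = gfpSet F := by
  have h1 : gfpSet F ⊆ F (gfpSet F) := by
    intro x hx
    obtain ⟨S, hS, hxS⟩ := Set.mem_sUnion.1 hx
    exact hF (my_le_gfpSet hS) (hS hxS)
  exact Set.Subset.antisymm (my_le_gfpSet (hF h1)) h1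

theorem my_lfpSet_mono {F F' : Set Q → Set Q} (h : ∀ S, F S ⊆ F' S) :
    lfpSet F ⊆ lfpSet F' :=
  Set.sInter_subset_sInter fun S hS => (h S).trans hS

theorem my_gfpSet_mono {F F' : Set Q → Set Q} (h : ∀ S, F S ⊆ F' S) :
    gfpSet F ⊆ gfpSet F' :=
  Set.sUnion_subset_sUnion fun S hS => hS.trans (h S)

theorem iter_subset_lfpSet {F : Set Q → Set Q} (hF : Monotone F) :
    ∀ n, F^[n] (∅ : Set Q) ⊆ lfpSet F := by
  intro n
  induction n with
  | zero => simp
  | succ n ih =>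
      rw [Function.iterate_succ_apply']
      calc F (F^[n] ∅) ⊆ F (lfpSet F) := hF ih
        _ = lfpSet F := my_lfpSet_fixed hF

theorem iter_succ_mono {F : Set Q → Set Q} (hF : Monotone F) :
    ∀ n, F^[n] (∅ : Set Q) ⊆ F^[n + 1] ∅ := by
  intro n
  induction n with
  | zero => simp
  | succ n ih =>
      rw [Function.iterate_succ_apply', Function.iterate_succ_apply']
      exact hF ih

theorem iter_mono_nat {F : Set Q → Set Q} (hF : Monotone F) :
    Monotone fun n => F^[n] (∅ : Set Q) :=
  monotone_nat_of_le_succ (iter_succ_mono hF)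

theorem lfpSet_subset_iUnion [Fintype Q] {F : Set Q → Set Q} (hF : Monotone F) :
    lfpSet F ⊆ ⋃ n, F^[n] (∅ : Set Q) := by
  have hstab : ∃ n, F^[n + 1] (∅ : Set Q) = F^[n] ∅ := by
    by_contra hcon
    push_neg at hcon
    have hcard : ∀ n, n ≤ (F^[n] (∅ : Set Q)).ncard := by
      intro n
      induction n with
      | zero => simp
      | succ n ih =>
          have hss : F^[n] (∅ : Set Q) ⊂ F^[n + 1] ∅ :=
            (Set.ssubset_iff_subset_ne).2 ⟨iter_succ_mono hF n, fun h => hcon n h.symm⟩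
          have := Set.ncard_lt_ncard hss (Set.toFinite _)
          omega
    have h2 := hcard (Fintype.card Q + 1)
    have h3 : (F^[Fintype.card Q + 1] (∅ : Set Q)).ncard ≤ Fintype.card Q := by
      have := Set.ncard_le_ncard (Set.subset_univ (F^[Fintype.card Q + 1] (∅ : Set Q)))
        Set.finite_univ
      simpa [Set.ncard_univ] using this
    omega
  obtain ⟨n, hn⟩ := hstab
  have hfix : F (F^[n] (∅ : Set Q)) ⊆ F^[n] ∅ := by
    have h2 : F (F^[n] (∅ : Set Q)) = F^[n + 1] ∅ := (Function.iterate_succ_apply' F n ∅).symm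
    rw [h2]
    exact hn.subset
  exact (my_lfpSet_le hfix).trans (Set.subset_iUnion (fun n => F^[n] (∅ : Set Q)) n)

variable (G : GameGraph Q) (FA FG : Set Q)

theorem myPreE_mono {P P' : Set Q} (h : P ⊆ P') : G.PreE P ⊆ G.PreE P' := by
  rintro x ⟨y, hy1, hy2⟩
  exact ⟨y, hy1, h hy2⟩

theorem myPre1_mono {P P' : Set Q} (h : P ⊆ P') : G.Pre1 P ⊆ G.Pre1 P' := by
  rintro x (⟨he, hd⟩ | ⟨hs, y, hy1, hy2⟩)
  · exact Or.inl ⟨he, hd.trans h⟩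
  · exact Or.inr ⟨hs, y, hy1, h hy2⟩

theorem myPreE_empty : G.PreE (∅ : Set Q) = ∅ := by
  ext x
  simp [GameGraph.PreE]

theorem myPre1_empty : G.Pre1 (∅ : Set Q) = ∅ := by
  ext x
  constructor
  · rintro (⟨_, h⟩ | ⟨_, y, _, hy⟩)
    · obtain ⟨y, hy⟩ := G.delta_nonempty x
      exact (h hy).elim
    · exact hy.elim
  · intro h
    exact h.elim

theorem myPre1_env {q : Q} {P : Set Q} (hq : q ∈ G.env) (h : q ∈ G.Pre1 P) :
    G.delta q ⊆ P := by
  rcases h with ⟨_, h⟩ | ⟨hs, _⟩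
  · exact h
  · exact absurd hs (Set.disjoint_left.1 G.disjoint_env_sys hq)

theorem myPrecond_mono {P1 P1' P2 P2' : Set Q} (h1 : P1 ⊆ P1') (h2 : P2 ⊆ P2') :
    G.Precond P1 P2 ⊆ G.Precond P1' P2' :=
  Set.inter_subset_inter (myPreE_mono G h1)
    (myPre1_mono G (Set.union_subset_union h1 h2))

theorem body_subset {Z Z' Y Y' X X' W W' : Set Q} (hZ : Z ⊆ Z') (hY : Y ⊆ Y')
    (hX : X ⊆ X') (hW : W ⊆ W') :
    body G FA FG Z Y X W ⊆ body G FA FG Z' Y' X' W' := by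
  unfold body
  refine Set.union_subset_union (Set.union_subset_union ?_ ?_) ?_
  · exact Set.inter_subset_inter subset_rfl (myPre1_mono G hZ)
  · exact myPre1_mono G hY
  · exact Set.inter_subset_inter subset_rfl
      (myPrecond_mono G hW (Set.diff_subset_diff_left hX))

theorem innerW_subset {Z Z' Y Y' X X' : Set Q} (hZ : Z ⊆ Z') (hY : Y ⊆ Y') (hX : X ⊆ X') :
    innerW G FA FG Z Y X ⊆ innerW G FA FG Z' Y' X' :=
  my_lfpSet_mono fun W => body_subset G FA FG hZ hY hX subset_rfl

theorem innerX_subset {Z Z' Y Y' : Set Q} (hZ : Z ⊆ Z') (hY : Y ⊆ Y') :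
    innerX G FA FG Z Y ⊆ innerX G FA FG Z' Y' :=
  my_gfpSet_mono fun X => innerW_subset G FA FG hZ hY subset_rfl

theorem innerY_subset {Z Z' : Set Q} (hZ : Z ⊆ Z') :
    innerY G FA FG Z ⊆ innerY G FA FG Z' :=
  my_lfpSet_mono fun Y => innerX_subset G FA FG hZ subset_rfl

theorem phi4_fixed : innerY G FA FG (phi4 G FA FG) = phi4 G FA FG :=
  my_gfpSet_fixed fun _ _ h => innerY_subset G FA FG h

theorem Yapprox_eq_iter (i : ℕ) :
    Yapprox G FA FG i = (fun Y => innerX G FA FG (phi4 G FA FG) Y)^[i] ∅ := by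
  induction i with
  | zero => rfl
  | succ i ih =>
      rw [Function.iterate_succ_apply']
      simp only [Yapprox]
      rw [ih]

theorem Yapprox_subset_phi4 (i : ℕ) : Yapprox G FA FG i ⊆ phi4 G FA FG := by
  rw [Yapprox_eq_iter]
  have hm : Monotone fun Y => innerX G FA FG (phi4 G FA FG) Y :=
    fun _ _ h => innerX_subset G FA FG subset_rfl h
  refine (iter_subset_lfpSet hm i).trans ?_
  rw [show lfpSet (fun Y => innerX G FA FG (phi4 G FA FG) Y)
      = innerY G FA FG (phi4 G FA FG) from rfl, phi4_fixed]

theorem Yapprox_mono : Monotone (Yapprox G FA FG) := by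
  intro a b h
  rw [Yapprox_eq_iter, Yapprox_eq_iter]
  exact iter_mono_nat (fun _ _ h => innerX_subset G FA FG subset_rfl h) h

theorem mem_Yapprox [Fintype Q] {q : Q} (hq : q ∈ phi4 G FA FG) :
    ∃ i, q ∈ Yapprox G FA FG i := by
  have hm : Monotone fun Y => innerX G FA FG (phi4 G FA FG) Y :=
    fun _ _ h => innerX_subset G FA FG subset_rfl h
  have h1 : q ∈ lfpSet fun Y => innerX G FA FG (phi4 G FA FG) Y := by
    rw [show lfpSet (fun Y => innerX G FA FG (phi4 G FA FG) Y)
        = innerY G FA FG (phi4 G FA FG) from rfl, phi4_fixed]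
    exact hq
  obtain ⟨n, hn⟩ := Set.mem_iUnion.1 (lfpSet_subset_iUnion hm h1)
  exact ⟨n, by rw [Yapprox_eq_iter]; exact hn⟩

theorem Yapprox_succ_fixed (k : ℕ) :
    lfpSet (fun W => body G FA FG (phi4 G FA FG) (Yapprox G FA FG k)
      (Yapprox G FA FG (k + 1)) W) = Yapprox G FA FG (k + 1) := by
  have hm : Monotone fun X => innerW G FA FG (phi4 G FA FG) (Yapprox G FA FG k) X :=
    fun _ _ h => innerW_subset G FA FG subset_rfl subset_rfl h
  exact my_gfpSet_fixed hm

theorem Wapprox_eq_iter (k j : ℕ) :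
    Wapprox G FA FG (k + 1) j =
      (fun W => body G FA FG (phi4 G FA FG) (Yapprox G FA FG k)
        (Yapprox G FA FG (k + 1)) W)^[j] ∅ := by
  induction j with
  | zero => rfl
  | succ j ih =>
      rw [Function.iterate_succ_apply']
      simp only [Wapprox, Nat.add_sub_cancel]
      rw [ih]

theorem Wapprox_subset_Yapprox (k j : ℕ) :
    Wapprox G FA FG (k + 1) j ⊆ Yapprox G FA FG (k + 1) := by
  rw [Wapprox_eq_iter]
  exact (iter_subset_lfpSet
    (fun _ _ h => body_subset G FA FG subset_rfl subset_rfl subset_rfl h) j).trans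
    (Yapprox_succ_fixed G FA FG k).subset

theorem Wapprox_mono (k : ℕ) : Monotone (Wapprox G FA FG (k + 1)) := by
  intro a b h
  rw [Wapprox_eq_iter, Wapprox_eq_iter]
  exact iter_mono_nat
    (fun _ _ h => body_subset G FA FG subset_rfl subset_rfl subset_rfl h) h

theorem mem_Wapprox [Fintype Q] {q : Q} (k : ℕ) (hq : q ∈ Yapprox G FA FG (k + 1)) :
    ∃ j, q ∈ Wapprox G FA FG (k + 1) j := by
  rw [← Yapprox_succ_fixed] at hq
  obtain ⟨n, hn⟩ := Set.mem_iUnion.1 (lfpSet_subset_iUnion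
    (fun _ _ h => body_subset G FA FG subset_rfl subset_rfl subset_rfl h) hq)
  exact ⟨n, by rw [Wapprox_eq_iter]; exact hn⟩

theorem rank_exists [Fintype Q] {q : Q} (hq : q ∈ phi4 G FA FG) :
    ∃ i j, hasRank G FA FG q i j := by
  classical
  have hex : ∃ i, q ∈ Yapprox G FA FG i := mem_Yapprox G FA FG hq
  set i0 := Nat.find hex with hi0def
  have hq0 : q ∈ Yapprox G FA FG i0 := Nat.find_spec hex
  have hpos : 0 < i0 := by
    rcases Nat.eq_zero_or_pos i0 with h | h
    · rw [h] at hq0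
      exact hq0.elim
    · exact h
  have hnot : q ∉ Yapprox G FA FG (i0 - 1) := Nat.find_min hex (by omega)
  obtain ⟨k, hk⟩ : ∃ k, i0 = k + 1 := ⟨i0 - 1, by omega⟩
  have hexj : ∃ j, q ∈ Wapprox G FA FG i0 j := by
    obtain ⟨j, hj⟩ := mem_Wapprox G FA FG k (by rw [hk] at hq0; exact hq0)
    exact ⟨j, by rw [hk]; exact hj⟩
  set j0 := Nat.find hexj with hj0def
  have hqj : q ∈ Wapprox G FA FG i0 j0 := Nat.find_spec hexj
  have hjpos : 0 < j0 := by
    rcases Nat.eq_zero_or_pos j0 with h | h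
    · rw [h] at hqj
      rw [hk] at hqj
      exact hqj.elim
    · exact h
  have hnotW : q ∉ Wapprox G FA FG i0 (j0 - 1) := Nat.find_min hexj (by omega)
  exact ⟨i0, j0, hpos, hjpos, ⟨⟨hq0, hnot⟩, hqj, hnotW⟩⟩

theorem hasRank_mem_phi4 {q : Q} {i j : ℕ} (h : hasRank G FA FG q i j) :
    q ∈ phi4 G FA FG :=
  Yapprox_subset_phi4 G FA FG i h.2.2.1.1

theorem rank_fst_le {q : Q} {i j i' : ℕ} (h : hasRank G FA FG q i j)
    (hmem : q ∈ Yapprox G FA FG i') : i ≤ i' := by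
  by_contra hlt
  push_neg at hlt
  exact h.2.2.1.2 (Yapprox_mono G FA FG (show i' ≤ i - 1 by omega) hmem)

theorem rank_snd_le {q : Q} {i j j' : ℕ} (h : hasRank G FA FG q i j)
    (hmem : q ∈ Wapprox G FA FG i j') : j ≤ j' := by
  have hipos : 0 < i := h.1
  by_contra hlt
  push_neg at hlt
  obtain ⟨k, rfl⟩ : ∃ k, i = k + 1 := ⟨i - 1, by omega⟩
  exact h.2.2.2.2 (Wapprox_mono G FA FG k (show j' ≤ j - 1 by omega) hmem)

theorem rank_unique {q : Q} {i j i' j' : ℕ} (h : hasRank G FA FG q i j)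
    (h' : hasRank G FA FG q i' j') : i = i' ∧ j = j' := by
  have h1 : i ≤ i' := rank_fst_le G FA FG h h'.2.2.1.1
  have h2 : i' ≤ i := rank_fst_le G FA FG h' h.2.2.1.1
  have hii : i = i' := le_antisymm h1 h2
  subst hii
  have h3 : j ≤ j' := rank_snd_le G FA FG h h'.2.2.2.1
  have h4 : j' ≤ j := rank_snd_le G FA FG h' h.2.2.2.1
  exact ⟨rfl, le_antisymm h3 h4⟩

theorem body_W_empty (Z Y X : Set Q) :
    body G FA FG Z Y X ∅ = (FG ∩ G.Pre1 Z) ∪ G.Pre1 Y := by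
  unfold body GameGraph.Precond
  rw [myPreE_empty]
  simp

theorem Wapprox_one (k : ℕ) :
    Wapprox G FA FG (k + 1) 1 =
      (FG ∩ G.Pre1 (phi4 G FA FG)) ∪ G.Pre1 (Yapprox G FA FG k) := by
  have h : Wapprox G FA FG (k + 1) 1 = body G FA FG (phi4 G FA FG)
      (Yapprox G FA FG (k + 1 - 1)) (Yapprox G FA FG (k + 1))
      (Wapprox G FA FG (k + 1) 0) := rfl
  rw [h, show Wapprox G FA FG (k + 1) 0 = ∅ from rfl, body_W_empty, Nat.add_sub_cancel]

theorem rank_one_one {q : Q} (h : hasRank G FA FG q 1 1) :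
    q ∈ FG ∧ q ∈ G.Pre1 (phi4 G FA FG) := by
  have hW := h.2.2.2.1
  rw [show (1 : ℕ) = 0 + 1 from rfl, Wapprox_one] at hW
  rcases hW with h1 | h2
  · exact h1
  · rw [show Yapprox G FA FG 0 = ∅ from rfl, myPre1_empty] at h2
    exact h2.elim

theorem env_one_one {q : Q} (hq : q ∈ G.env) (h : hasRank G FA FG q 1 1) :
    G.delta q ⊆ phi4 G FA FG :=
  myPre1_env G hq (rank_one_one G FA FG h).2

theorem env_step [Fintype Q] {q : Q} {i j : ℕ} (hq : q ∈ G.env)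
    (h : hasRank G FA FG q i j) (hne : (i, j) ≠ ((1 : ℕ), (1 : ℕ))) :
    ∃ q', q' ∈ G.delta q ∧ ∃ i' j', hasRank G FA FG q' i' j' ∧ rankLt (i', j') (i, j) := by
  obtain ⟨hipos, hjpos, ⟨⟨hY, hYn⟩, hW, hWn⟩⟩ := h
  obtain ⟨k, rfl⟩ : ∃ k, i = k + 1 := ⟨i - 1, by omega⟩
  simp only [Nat.add_sub_cancel] at hYn
  rcases Nat.lt_or_ge j 2 with hj1 | hj2
  · have hj : j = 1 := by omega
    subst hj
    have hk : 0 < k := by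
      rcases Nat.eq_zero_or_pos k with h0 | h0
      · subst h0
        exact absurd rfl hne
      · exact h0
    rw [Wapprox_one] at hW
    rcases hW with hFGm | hPre
    · have h1 : q ∈ Yapprox G FA FG 1 :=
        Wapprox_subset_Yapprox G FA FG 0 1 (by rw [Wapprox_one]; exact Or.inl hFGm)
      exact absurd (Yapprox_mono G FA FG (show 1 ≤ k by omega) h1) hYn
    · have hsub := myPre1_env G hq hPre
      obtain ⟨q', hq'⟩ := G.delta_nonempty q
      have hq'Y : q' ∈ Yapprox G FA FG k := hsub hq'
      obtain ⟨i', j', hr⟩ := rank_exists G FA FG (Yapprox_subset_phi4 G FA FG k hq'Y)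
      have hle : i' ≤ k := rank_fst_le G FA FG hr hq'Y
      exact ⟨q', hq', i', j', hr, Or.inl (by omega)⟩
  · obtain ⟨l, rfl⟩ : ∃ l, j = l + 1 := ⟨j - 1, by omega⟩
    have hl : 0 < l := by omega
    simp only [Nat.add_sub_cancel] at hWn
    have hWu : q ∈ body G FA FG (phi4 G FA FG) (Yapprox G FA FG k)
        (Yapprox G FA FG (k + 1)) (Wapprox G FA FG (k + 1) l) := by
      have h : Wapprox G FA FG (k + 1) (l + 1) = body G FA FG (phi4 G FA FG)
          (Yapprox G FA FG (k + 1 - 1)) (Yapprox G FA FG (k + 1))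
          (Wapprox G FA FG (k + 1) l) := rfl
      rw [h, Nat.add_sub_cancel] at hW
      exact hW
    rcases hWu with (hFGm | hPre) | hPrecond
    · refine absurd (Wapprox_mono G FA FG k (show 1 ≤ l by omega) ?_) hWn
      rw [Wapprox_one]
      exact Or.inl hFGm
    · refine absurd (Wapprox_mono G FA FG k (show 1 ≤ l by omega) ?_) hWn
      rw [Wapprox_one]
      exact Or.inr hPre
    · obtain ⟨hFA, hPreE, hPre1⟩ := hPrecond
      obtain ⟨q', hq'd, hq'W⟩ := hPreE
      obtain ⟨i', j', hr⟩ := rank_exists G FA FG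
        (Yapprox_subset_phi4 G FA FG (k + 1) (Wapprox_subset_Yapprox G FA FG k l hq'W))
      have hi' : i' ≤ k + 1 :=
        rank_fst_le G FA FG hr (Wapprox_subset_Yapprox G FA FG k l hq'W)
      rcases Nat.lt_or_ge i' (k + 1) with hcase | hcase
      · exact ⟨q', hq'd, i', j', hr, Or.inl hcase⟩
      · have hii : i' = k + 1 := by omega
        subst hii
        have hj' : j' ≤ l := rank_snd_le G FA FG hr hq'W
        exact ⟨q', hq'd, k + 1, j', hr, Or.inr ⟨rfl, by omega⟩⟩

end Aux7

/-- Lemma 4 of the paper: for all `q ∈ Z^∞`,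
`L_q(H,f¹) ∩ L_q(H,F_G) ≠ ∅`, i.e. there exists a play from `q` compliant with `f¹`
that visits `F_G` infinitely often. -/
theorem exists_guarantee_play {Q : Type*} [Fintype Q] (G : GameGraph Q)
    (FA FG : Set Q) (f : Q → Q) (hf : GoodStrategy G FA FG f)
    (q : Q) (hq : q ∈ phi4 G FA FG) :
    (Lmem G q f ∩ LBuchi G q FG).Nonempty := by
  classical
  have hstep : ∀ x : Q, ∃ x', x' ∈ G.delta x ∧ (x ∈ phi4 G FA FG →
      (x' ∈ phi4 G FA FG ∧ (x ∈ G.sys → x' = f x) ∧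
        ∀ i j, hasRank G FA FG x i j → (i, j) ≠ ((1 : ℕ), (1 : ℕ)) →
          ∃ i' j', hasRank G FA FG x' i' j' ∧ rankLt (i', j') (i, j))) := by
    intro x
    by_cases hx : x ∈ phi4 G FA FG
    · obtain ⟨i0, j0, hr0⟩ := rank_exists G FA FG hx
      have hxor : x ∈ G.env ∨ x ∈ G.sys := by
        have hmem : x ∈ G.env ∪ G.sys := by
          rw [G.union_env_sys]
          exact Set.mem_univ x
        exact hmem
      rcases hxor with henv | hsys
      · have hnsys : x ∉ G.sys := Set.disjoint_left.1 G.disjoint_env_sys henv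
        by_cases h11 : (i0, j0) = ((1 : ℕ), (1 : ℕ))
        · obtain ⟨x', hx'⟩ := G.delta_nonempty x
          rw [Prod.mk.injEq] at h11
          rw [h11.1, h11.2] at hr0
          refine ⟨x', hx', fun _ => ⟨env_one_one G FA FG henv hr0 hx',
            fun hsys => absurd hsys hnsys, ?_⟩⟩
          intro i j hr hne
          obtain ⟨hi, hj⟩ := rank_unique G FA FG hr hr0
          exact absurd (by rw [hi, hj]) hne
        · obtain ⟨x', hx'd, i', j', hr', hlt⟩ := env_step G FA FG henv hr0 h11
          refine ⟨x', hx'd, fun _ => ⟨hasRank_mem_phi4 G FA FG hr',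
            fun hsys => absurd hsys hnsys, ?_⟩⟩
          intro i j hr hne
          obtain ⟨hi, hj⟩ := rank_unique G FA FG hr hr0
          exact ⟨i', j', hr', by rw [hi, hj]; exact hlt⟩
      · obtain ⟨hfd, hfr⟩ := hf x hsys hx
        have hfZ : f x ∈ phi4 G FA FG := by
          by_cases h11 : (i0, j0) = ((1 : ℕ), (1 : ℕ))
          · exact (hfr i0 j0 hr0).1 h11
          · obtain ⟨i', j', hr', _⟩ := (hfr i0 j0 hr0).2 h11
            exact hasRank_mem_phi4 G FA FG hr'
        exact ⟨f x, hfd, fun _ => ⟨hfZ, fun _ => rfl, fun i j hr hne => (hfr i j hr).2 hne⟩⟩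
    · obtain ⟨x', hx'⟩ := G.delta_nonempty x
      exact ⟨x', hx', fun h => absurd h hx⟩
  choose g hg1 hg2 using hstep
  set π : ℕ → Q := fun k => g^[k] q with hπ
  have hπs : ∀ k, π (k + 1) = g (π k) := fun k => Function.iterate_succ_apply' g k q
  have hmem : ∀ k, π k ∈ phi4 G FA FG := by
    intro k
    induction k with
    | zero => exact hq
    | succ k ih =>
        rw [hπs]
        exact (hg2 (π k) ih).1
  have hplay : IsPlayFrom G q π := ⟨rfl, fun k => by rw [hπs]; exact hg1 (π k)⟩
  have hcompl : ∀ k, π k ∈ G.sys → π (k + 1) = f (π k) := by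
    intro k hk
    rw [hπs]
    exact (hg2 (π k) (hmem k)).2.1 hk
  have reach : ∀ i j (x : Q), hasRank G FA FG x i j → ∃ k, g^[k] x ∈ FG := by
    intro i
    induction i using Nat.strong_induction_on with
    | _ i ih =>
      intro j
      induction j using Nat.strong_induction_on with
      | _ j ihj =>
        intro x hx
        by_cases h11 : (i, j) = ((1 : ℕ), (1 : ℕ))
        · rw [Prod.mk.injEq] at h11
          rw [h11.1, h11.2] at hx
          exact ⟨0, (rank_one_one G FA FG hx).1⟩
        · obtain ⟨i', j', hr', hlt⟩ :=
            (hg2 x (hasRank_mem_phi4 G FA FG hx)).2.2 i j hx h11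
          rcases hlt with hlt | ⟨heq, hlt⟩
          · obtain ⟨k, hk⟩ := ih i' hlt j' (g x) hr'
            exact ⟨k + 1, by rw [Function.iterate_succ_apply]; exact hk⟩
          · rw [show i' = i from heq] at hr'
            obtain ⟨k, hk⟩ := ihj j' hlt (g x) hr'
            exact ⟨k + 1, by rw [Function.iterate_succ_apply]; exact hk⟩
  refine ⟨π, ⟨hplay, hcompl⟩, hplay, ?_⟩
  intro n
  obtain ⟨i, j, hr⟩ := rank_exists G FA FG (hmem n)
  obtain ⟨k, hk⟩ := reach i j (π n) hr
  refine ⟨k + n, le_add_self, ?_⟩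
  have hiter : π (k + n) = g^[k] (π n) := Function.iterate_add_apply g k n q
  rw [hiter]
  exact hk

end GR1
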